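/- Let Γ be a simple graph of order n and size m. If there exists a partition {V_1,...,V_r} of the vertex set of Γ into r ≥ 2 global defensive k-alliances such that |V_i| ≤ n/2 for every i, then the isoperimetric number satisfies i(Γ) ≤ (2m − nk)/(2n). -/

import Mathlib

open Finset

/-- The number of neighbors that the vertex `v` has inside the set `S`. -/
def degIn {V : Type*} [Fintype V] [DecidableEq V] (G : SimpleGraph V) [DecidableRel G.Adj]
    (S : Finset V) (v : V) : ℕ :=
  (S.filter fun u => G.Adj v u).card

/-- `S` is a defensive `k`-alliance: `S` is nonempty and every vertex of `S` has at least
`k` more neighbors inside `S` than outside. -/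
def IsDefensiveAlliance {V : Type*} [Fintype V] [DecidableEq V] (G : SimpleGraph V)
    [DecidableRel G.Adj] (k : ℤ) (S : Finset V) : Prop :=
  S.Nonempty ∧ ∀ v ∈ S, (degIn G Sᶜ v : ℤ) + k ≤ (degIn G S v : ℤ)

/-- `S` is a dominating set: every vertex outside `S` has a neighbor in `S`. -/
def IsDominatingSet {V : Type*} [Fintype V] [DecidableEq V] (G : SimpleGraph V)
    (S : Finset V) : Prop :=
  ∀ v ∉ S, ∃ u ∈ S, G.Adj v u

/-- A global defensive `k`-alliance is a defensive `k`-alliance which is a dominating set. -/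
def IsGlobalDefensiveAlliance {V : Type*} [Fintype V] [DecidableEq V] (G : SimpleGraph V)
    [DecidableRel G.Adj] (k : ℤ) (S : Finset V) : Prop :=
  IsDefensiveAlliance G k S ∧ IsDominatingSet G S

/-- The defensive `k`-alliance number: the minimum cardinality of a defensive `k`-alliance. -/
noncomputable def defAllianceNum {V : Type*} [Fintype V] [DecidableEq V] (G : SimpleGraph V)
    [DecidableRel G.Adj] (k : ℤ) : ℕ :=
  sInf {s : ℕ | ∃ S : Finset V, IsDefensiveAlliance G k S ∧ S.card = s}

/-- The global defensive `k`-alliance number. -/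
noncomputable def globalDefAllianceNum {V : Type*} [Fintype V] [DecidableEq V] (G : SimpleGraph V)
    [DecidableRel G.Adj] (k : ℤ) : ℕ :=
  sInf {s : ℕ | ∃ S : Finset V, IsGlobalDefensiveAlliance G k S ∧ S.card = s}

/-- A partition of the vertex set all whose parts are defensive `k`-alliances. -/
def IsDefAlliancePartition {V : Type*} [Fintype V] [DecidableEq V] (G : SimpleGraph V)
    [DecidableRel G.Adj] (k : ℤ) (P : Finpartition (univ : Finset V)) : Prop :=
  ∀ S ∈ P.parts, IsDefensiveAlliance G k S

/-- A partition of the vertex set all whose parts are global defensive `k`-alliances. -/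
def IsGlobalDefAlliancePartition {V : Type*} [Fintype V] [DecidableEq V] (G : SimpleGraph V)
    [DecidableRel G.Adj] (k : ℤ) (P : Finpartition (univ : Finset V)) : Prop :=
  ∀ S ∈ P.parts, IsGlobalDefensiveAlliance G k S

/-- The defensive `k`-alliance partition number `ψₖᵈ`. -/
noncomputable def defPartitionNum {V : Type*} [Fintype V] [DecidableEq V] (G : SimpleGraph V)
    [DecidableRel G.Adj] (k : ℤ) : ℕ :=
  sSup {r : ℕ | ∃ P : Finpartition (univ : Finset V),
    IsDefAlliancePartition G k P ∧ P.parts.card = r}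

/-- The global defensive `k`-alliance partition number `ψₖᵍᵈ`. -/
noncomputable def globalDefPartitionNum {V : Type*} [Fintype V] [DecidableEq V]
    (G : SimpleGraph V) [DecidableRel G.Adj] (k : ℤ) : ℕ :=
  sSup {r : ℕ | ∃ P : Finpartition (univ : Finset V),
    IsGlobalDefAlliancePartition G k P ∧ P.parts.card = r}

/-- The isoperimetric number of `G`:
`i(G) = min { (∑_{v ∈ S} δ_{S̄}(v)) / |S| : ∅ ≠ S ⊆ V, |S| ≤ n/2 }`. -/
noncomputable def isoperimetricNumber {V : Type*} [Fintype V] [DecidableEq V]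
    (G : SimpleGraph V) [DecidableRel G.Adj] : ℝ :=
  sInf {x : ℝ | ∃ S : Finset V, S.Nonempty ∧ 2 * S.card ≤ Fintype.card V ∧
    x = (∑ v ∈ S, (degIn G Sᶜ v : ℝ)) / (S.card : ℝ)}

/-
Sum the alliance condition `2 δ_{S̄}(v) ≤ deg v - k` over each part and then over the partition:
the boundaries of the parts add up to at most `(2m - nk)/2`, by the handshake lemma. Some part
`S` therefore has boundary-to-size ratio at most the average `(2m - nk)/(2n)`, and since
`|S| ≤ n/2` it competes in the infimum defining `i(Γ)`.
-/

theorem Finpartition.sum_sum_parts {α M : Type*} [DecidableEq α] [AddCommMonoid M]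
    {s : Finset α} (P : Finpartition s) (f : α → M) :
    ∑ t ∈ P.parts, ∑ a ∈ t, f a = ∑ a ∈ s, f a := by
  simpa only [P.biUnion_parts, id] using (sum_biUnion P.supIndep.pairwiseDisjoint).symm

theorem Finpartition.exists_mem_parts_mul_card_le {α : Type*} [DecidableEq α] {s : Finset α}
    (hs : s.Nonempty) (P : Finpartition s) (f : Finset α → ℝ) :
    ∃ t ∈ P.parts, f t * #s ≤ (∑ u ∈ P.parts, f u) * #t := by
  refine exists_le_of_sum_le (P.parts_nonempty hs.ne_empty) ?_
  have hcard : ∑ t ∈ P.parts, (#t : ℝ) = #s := mod_cast P.sum_card_parts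
  rw [← sum_mul, ← mul_sum, hcard]

section

variable {V : Type*} [Fintype V] [DecidableEq V] (G : SimpleGraph V) [DecidableRel G.Adj]

theorem degIn_add_degIn_compl (S : Finset V) (v : V) :
    degIn G S v + degIn G Sᶜ v = G.degree v := by
  rw [SimpleGraph.degree, SimpleGraph.neighborFinset_eq_filter, degIn, degIn,
    ← card_union_of_disjoint (disjoint_filter_filter disjoint_compl_right),
    ← filter_union, union_compl]

noncomputable def edgeBoundarySize (S : Finset V) : ℝ :=
  ∑ v ∈ S, (degIn G Sᶜ v : ℝ)

theorem isoperimetricNumber_le_div {S : Finset V} (hS : S.Nonempty)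
    (hSn : 2 * #S ≤ Fintype.card V) :
    isoperimetricNumber G ≤ edgeBoundarySize G S / #S := by
  refine csInf_le ⟨0, ?_⟩ ⟨S, hS, hSn, rfl⟩
  rintro x ⟨T, -, -, rfl⟩
  positivity

theorem isoperimetricNumber_le_of_finpartition (P : Finpartition (univ : Finset V))
    (hsmall : ∀ S ∈ P.parts, 2 * #S ≤ Fintype.card V) :
    isoperimetricNumber G ≤
      (∑ S ∈ P.parts, edgeBoundarySize G S) / Fintype.card V := by
  rcases isEmpty_or_nonempty V with hV | hV
  · rw [Fintype.card_eq_zero, Nat.cast_zero, div_zero]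
    refine Real.sInf_nonpos ?_
    rintro x ⟨S, ⟨v, -⟩, -⟩
    exact isEmptyElim v
  obtain ⟨S, hS, hSavg⟩ :=
    P.exists_mem_parts_mul_card_le univ_nonempty (edgeBoundarySize G)
  have hSpos : (0 : ℝ) < #S := mod_cast (P.nonempty_of_mem_parts hS).card_pos
  calc isoperimetricNumber G ≤ edgeBoundarySize G S / #S :=
        isoperimetricNumber_le_div G (P.nonempty_of_mem_parts hS) (hsmall S hS)
    _ ≤ (∑ S ∈ P.parts, edgeBoundarySize G S) / Fintype.card V := by
        rw [div_le_div_iff₀ hSpos (mod_cast Fintype.card_pos), ← card_univ]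
        exact hSavg

variable {G}

theorem IsDefensiveAlliance.two_mul_edgeBoundarySize_le {k : ℤ} {S : Finset V}
    (hS : IsDefensiveAlliance G k S) :
    2 * edgeBoundarySize G S ≤ ∑ v ∈ S, (G.degree v : ℝ) - #S * k := by
  have hv : ∀ v ∈ S, 2 * (degIn G Sᶜ v : ℝ) ≤ G.degree v - k := fun v hv => by
    have hsplit : (degIn G S v : ℝ) + degIn G Sᶜ v = G.degree v :=
      mod_cast degIn_add_degIn_compl G S v
    have halliance : (degIn G Sᶜ v : ℝ) + k ≤ degIn G S v := mod_cast hS.2 v hv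
    linarith
  calc 2 * edgeBoundarySize G S = ∑ v ∈ S, 2 * (degIn G Sᶜ v : ℝ) := mul_sum _ _ _
    _ ≤ ∑ v ∈ S, ((G.degree v : ℝ) - k) := sum_le_sum hv
    _ = ∑ v ∈ S, (G.degree v : ℝ) - #S * k := by rw [sum_sub_distrib, sum_const, nsmul_eq_mul]

theorem IsDefAlliancePartition.two_mul_sum_edgeBoundarySize_le {k : ℤ}
    {P : Finpartition (univ : Finset V)} (hP : IsDefAlliancePartition G k P) :
    2 * ∑ S ∈ P.parts, edgeBoundarySize G S ≤
      2 * #G.edgeFinset - Fintype.card V * k := by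
  have hdeg : ∑ S ∈ P.parts, ∑ v ∈ S, (G.degree v : ℝ) = 2 * #G.edgeFinset := by
    rw [P.sum_sum_parts]
    exact_mod_cast G.sum_degrees_eq_twice_card_edges
  have hcard : ∑ S ∈ P.parts, (#S : ℝ) = Fintype.card V := mod_cast P.sum_card_parts
  calc 2 * ∑ S ∈ P.parts, edgeBoundarySize G S
      ≤ ∑ S ∈ P.parts, (∑ v ∈ S, (G.degree v : ℝ) - #S * k) := by
        rw [mul_sum]
        exact sum_le_sum fun S hS => (hP S hS).two_mul_edgeBoundarySize_le
    _ = 2 * #G.edgeFinset - Fintype.card V * k := by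
        rw [sum_sub_distrib, hdeg, ← sum_mul, hcard]

end

theorem statement10_general {V : Type*} [Fintype V] [DecidableEq V]
    (G : SimpleGraph V) [DecidableRel G.Adj] (k : ℤ)
    (P : Finpartition (univ : Finset V)) (hP : IsGlobalDefAlliancePartition G k P)
    (hsmall : ∀ S ∈ P.parts, 2 * S.card ≤ Fintype.card V) :
    isoperimetricNumber G ≤
      (2 * (G.edgeFinset.card : ℝ) - (Fintype.card V : ℝ) * (k : ℝ)) /
        (2 * (Fintype.card V : ℝ)) := by
  have hbound : 2 * ∑ S ∈ P.parts, edgeBoundarySize G S ≤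
      2 * #G.edgeFinset - Fintype.card V * k :=
    IsDefAlliancePartition.two_mul_sum_edgeBoundarySize_le fun S hS => (hP S hS).1
  calc isoperimetricNumber G
      ≤ (∑ S ∈ P.parts, edgeBoundarySize G S) / Fintype.card V :=
        isoperimetricNumber_le_of_finpartition G P hsmall
    _ = (2 * ∑ S ∈ P.parts, edgeBoundarySize G S) / (2 * Fintype.card V : ℝ) :=
        (mul_div_mul_left _ _ two_ne_zero).symm
    _ ≤ _ := by gcongr

/-- If `Γ` (order `n`, size `m`) admits a partition into `r ≥ 2` global defensive
`k`-alliances all of whose parts have cardinality at most `n/2`, then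
`i(Γ) ≤ (2m - nk)/(2n)`. -/
theorem statement10 {V : Type*} [Fintype V] [DecidableEq V]
    (G : SimpleGraph V) [DecidableRel G.Adj] (k : ℤ) (r : ℕ) (hr : 2 ≤ r)
    (P : Finpartition (univ : Finset V)) (hP : IsGlobalDefAlliancePartition G k P)
    (hPr : P.parts.card = r)
    (hsmall : ∀ S ∈ P.parts, 2 * S.card ≤ Fintype.card V) :
    isoperimetricNumber G ≤
      (2 * (G.edgeFinset.card : ℝ) - (Fintype.card V : ℝ) * (k : ℝ)) /
        (2 * (Fintype.card V : ℝ)) :=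
  statement10_general G k P hP hsmall
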